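/- Fix n ≥ 1 and a formal power series β. Then (d/dg)^{n-1}[β(g)^n] = Σ_{T} ∏_{j∈U} β^{(deg_T(j))}(g), where the sum is over all labeled rooted trees T on an n-element set U and deg_T(j) = |T^{-1}(j)| is the number of children of j. -/

import Mathlib

/-!
By the Leibniz rule, `D^(n-1) (β₁ ⋯ βₙ)` is the sum over all maps `f : Fin (n-1) → Fin n` of
`∏ⱼ D^|f⁻¹(j)| βⱼ`. It therefore suffices to biject these maps with the rooted trees on `Fin n`
so that fibre sizes become numbers of children. We build the bijection fibrewise over each
degree sequence `d`, by induction on `n`. If `d` vanishes nowhere, both fibres are empty because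
`∑ d = n - 1`. If `d v = 0`, a tree in the fibre is a tree on the other vertices with the leaf `v`
hung below some `q`, and a map in the fibre avoids `v` and is a map on one point fewer together
with the image `q` of `0`; in both cases `q` contributes `Pi.single q 1` to the remaining degrees.
-/

/-- A labeled rooted tree on the vertex set `Fin n`. -/
def IsRTree (n : ℕ) (rp : Fin n × (Fin n → Fin n)) : Prop :=
  rp.2 rp.1 = rp.1 ∧ ∀ j : Fin n, ∃ k : ℕ, rp.2^[k] j = rp.1

open Function Polynomial

lemma Fin.natCard_subtype_eq_succAbove {n : ℕ} (v : Fin (n + 1)) (P : Fin (n + 1) → Prop)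
    [DecidablePred P] :
    Nat.card {i // P i} = Nat.card {i : Fin n // P (v.succAbove i)} + if P v then 1 else 0 := by
  simp only [Nat.card_eq_fintype_card, Fintype.card_subtype, Finset.card_filter]
  rw [Fin.sum_univ_succAbove _ v, add_comm]

lemma Fin.funext_iff_succAbove {α : Type*} {n : ℕ} {f g : Fin (n + 1) → α} (v : Fin (n + 1)) :
    f = g ↔ f v = g v ∧ f ∘ v.succAbove = g ∘ v.succAbove := by
  rw [funext_iff, v.forall_iff_succAbove, funext_iff]
  rfl

section FiberCard

variable {α β : Type*}

noncomputable def fiberCard (f : α → β) (b : β) : ℕ := Nat.card {a // f a = b}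

lemma fiberCard_eq_zero_iff [Finite α] {f : α → β} {b : β} :
    fiberCard f b = 0 ↔ ∀ a, f a ≠ b := by
  rw [fiberCard, Finite.card_eq_zero_iff, isEmpty_subtype]

lemma sum_fiberCard [Fintype α] [Fintype β] (f : α → β) :
    ∑ b, fiberCard f b = Fintype.card α := by
  rw [← Nat.card_eq_fintype_card, ← Nat.card_congr (Equiv.sigmaFiberEquiv f), Nat.card_sigma]
  rfl

lemma fiberCard_comp_of_injective {γ : Type*} {e : β → γ} (he : Injective e) (f : α → β) :
    fiberCard (e ∘ f) ∘ e = fiberCard f :=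
  funext fun _ => Nat.card_congr (Equiv.subtypeEquivRight fun _ => he.eq_iff)

lemma fiberCard_cons [DecidableEq β] {k : ℕ} (q : β) (g : Fin k → β) :
    fiberCard (Fin.cons q g : Fin (k + 1) → β) = fiberCard g + Pi.single q 1 := by
  funext b
  rw [fiberCard, Fin.natCard_subtype_eq_succAbove 0]
  simp [fiberCard, Pi.single_apply, eq_comm]

lemma Fintype.exists_eq_zero_of_sum_lt_card {ι : Type*} [Fintype ι] {d : ι → ℕ}
    (h : ∑ i, d i < Fintype.card ι) : ∃ i, d i = 0 := by
  by_contra! hd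
  have : Fintype.card ι ≤ ∑ i, d i := by
    simpa using Finset.sum_le_sum fun i (_ : i ∈ Finset.univ) => Nat.one_le_iff_ne_zero.2 (hd i)
  omega

end FiberCard

theorem Polynomial.iterate_derivative_prod_eq_sum_fiberCard {R ι : Type*} [CommSemiring R]
    [Fintype ι] [DecidableEq ι] (m : ℕ) (β : ι → R[X]) :
    derivative^[m] (∏ j, β j) = ∑ f : Fin m → ι, ∏ j, derivative^[fiberCard f j] (β j) := by
  induction m generalizing β with
  | zero => simp [fiberCard]
  | succ m ih =>
    have hD : derivative (∏ j, β j) = ∑ v, ∏ j, Function.update β v (derivative (β v)) j := by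
      rw [derivative_prod_finset]
      refine Finset.sum_congr rfl fun v _ => ?_
      rw [Finset.prod_update_of_mem (Finset.mem_univ v), Finset.sdiff_singleton_eq_erase,
        mul_comm]
    rw [iterate_succ_apply, hD, iterate_derivative_sum, ← (Fin.consEquiv fun _ => ι).sum_comp,
      Fintype.sum_prod_type]
    refine Finset.sum_congr rfl fun v _ => ?_
    rw [ih]
    refine Finset.sum_congr rfl fun f _ => Finset.prod_congr rfl fun j _ => ?_
    change _ = derivative^[fiberCard (Fin.cons v f : Fin (m + 1) → ι) j] (β j)
    rw [fiberCard_cons, Pi.add_apply]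
    rcases eq_or_ne j v with rfl | hj
    · simp [iterate_succ_apply]
    · simp [hj]

lemma isRTree_iff_of_semiconj {n N : ℕ} {e : Fin n → Fin N} (he : Injective e) {r : Fin n}
    {p : Fin n → Fin n} {p' : Fin N → Fin N} (hp : Semiconj e p p') :
    IsRTree n (r, p) ↔ p' (e r) = e r ∧ ∀ x, ∃ k, p'^[k] (e x) = e r := by
  simp only [IsRTree, ← hp.eq, ← (hp.iterate_right _).eq, he.eq_iff]

abbrev RTree (n : ℕ) : Type := {rp : Fin n × (Fin n → Fin n) // IsRTree n rp}

namespace RTree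

variable {n : ℕ}

def root (T : RTree n) : Fin n := T.1.1

def parent (T : RTree n) : Fin n → Fin n := T.1.2

noncomputable def childCount (T : RTree n) (j : Fin n) : ℕ :=
  Nat.card {i // i ≠ T.root ∧ T.parent i = j}

lemma parent_root (T : RTree n) : T.parent T.root = T.root := T.2.1

lemma exists_iterate_parent_eq_root (T : RTree n) (j : Fin n) : ∃ k, T.parent^[k] j = T.root :=
  T.2.2 j

@[ext]
lemma ext {T T' : RTree n} (hr : T.root = T'.root) (hp : T.parent = T'.parent) : T = T' :=
  Subtype.ext (Prod.ext hr hp)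

lemma childCount_eq_fiberCard (T : RTree n) :
    T.childCount = fiberCard fun i : {i // i ≠ T.root} => T.parent i :=
  funext fun _ => Nat.card_congr (Equiv.subtypeSubtypeEquivSubtypeInter _ _).symm

lemma sum_childCount (T : RTree n) : ∑ j, T.childCount j = n - 1 := by
  rw [childCount_eq_fiberCard, sum_fiberCard, Fintype.card_subtype_compl,
    Fintype.card_subtype_eq, Fintype.card_fin]

lemma childCount_eq_zero_iff {T : RTree n} {v : Fin n} :
    T.childCount v = 0 ↔ ∀ i, i ≠ T.root → T.parent i ≠ v := by
  rw [childCount, Finite.card_eq_zero_iff, isEmpty_subtype]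
  simp

lemma parent_ne_of_childCount_eq_zero {T : RTree n} {v : Fin n} (hv : T.childCount v = 0)
    (hvr : v ≠ T.root) (i : Fin n) : T.parent i ≠ v := by
  by_cases hi : i = T.root
  · rw [hi, T.parent_root]
    exact hvr.symm
  · exact childCount_eq_zero_iff.1 hv i hi

/-- A childless root cannot be reached from any other vertex. -/
lemma ne_root_of_childCount_eq_zero {T : RTree n} {v j : Fin n} (hv : T.childCount v = 0)
    (hj : j ≠ v) : v ≠ T.root := by
  rintro rfl
  have hnever : ∀ k, T.parent^[k] j ≠ T.root := by
    intro k
    induction k with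
    | zero => exact hj
    | succ k ih =>
      rw [iterate_succ_apply']
      exact childCount_eq_zero_iff.1 hv _ ih
  obtain ⟨k, hk⟩ := T.exists_iterate_parent_eq_root j
  exact hnever k hk

/-- The tree on `Fin (n + 1)` obtained from `T` by relabelling along `v.succAbove` and hanging
a new leaf `v` below `v.succAbove q`. -/
def attachLeaf (v : Fin (n + 1)) (q : Fin n) (T : RTree n) : RTree (n + 1) :=
  ⟨(v.succAbove T.root, v.insertNth (v.succAbove q) (v.succAbove ∘ T.parent)), by
    have hsc : Semiconj v.succAbove T.parent
        (v.insertNth (v.succAbove q) (v.succAbove ∘ T.parent)) := fun x =>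
      (Fin.insertNth_apply_succAbove (α := fun _ => Fin (n + 1)) v _
        (v.succAbove ∘ T.parent) x).symm
    obtain ⟨hroot, hreach⟩ := (isRTree_iff_of_semiconj v.succAbove_right_injective hsc).1 T.2
    refine ⟨hroot, v.forall_iff_succAbove.2 ⟨?_, hreach⟩⟩
    obtain ⟨k, hk⟩ := hreach q
    exact ⟨k + 1, (congrArg _ (Fin.insertNth_apply_same (α := fun _ => Fin (n + 1)) v _
      (v.succAbove ∘ T.parent))).trans hk⟩⟩

variable {v : Fin (n + 1)} {q : Fin n} {T : RTree n}

@[simp]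
lemma attachLeaf_root : (attachLeaf v q T).root = v.succAbove T.root := rfl

@[simp]
lemma attachLeaf_parent_self : (attachLeaf v q T).parent v = v.succAbove q :=
  Fin.insertNth_apply_same (α := fun _ => Fin (n + 1)) _ _ _

@[simp]
lemma attachLeaf_parent_succAbove (x : Fin n) :
    (attachLeaf v q T).parent (v.succAbove x) = v.succAbove (T.parent x) :=
  Fin.insertNth_apply_succAbove (α := fun _ => Fin (n + 1)) _ _ _ _

lemma childCount_attachLeaf_self : (attachLeaf v q T).childCount v = 0 :=
  childCount_eq_zero_iff.2 <| v.forall_iff_succAbove.2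
    ⟨fun _ => by simp [Fin.succAbove_ne], fun _ _ => by simp [Fin.succAbove_ne]⟩

lemma childCount_attachLeaf_comp_succAbove :
    (attachLeaf v q T).childCount ∘ v.succAbove = T.childCount + Pi.single q 1 := by
  funext j
  rw [comp_apply, childCount, Fin.natCard_subtype_eq_succAbove v]
  simp [childCount, Pi.single_apply, v.succAbove_right_injective.eq_iff, eq_comm]

lemma childCount_attachLeaf_eq_iff {d : Fin (n + 1) → ℕ} (hd : d v = 0) :
    (attachLeaf v q T).childCount = d ↔ T.childCount + Pi.single q 1 = d ∘ v.succAbove := by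
  rw [Fin.funext_iff_succAbove v, childCount_attachLeaf_self, hd,
    childCount_attachLeaf_comp_succAbove]
  exact and_iff_right rfl

lemma attachLeaf_injective (v : Fin (n + 1)) :
    Injective fun x : Fin n × RTree n => attachLeaf v x.1 x.2 := by
  rintro ⟨q, T⟩ ⟨q', T'⟩ h
  have hroot := congrArg root h
  have hparent := congrFun (congrArg parent h)
  have hq := hparent v
  have hparent' := fun x => hparent (v.succAbove x)
  simp only [attachLeaf_root, attachLeaf_parent_self, attachLeaf_parent_succAbove,
    v.succAbove_right_injective.eq_iff] at hroot hq hparent'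
  exact Prod.ext hq (RTree.ext hroot (funext hparent'))

lemma exists_attachLeaf_eq {v : Fin (n + 2)} {T : RTree (n + 2)} (hv : T.childCount v = 0) :
    ∃ q T₀, attachLeaf v q T₀ = T := by
  have hvr : v ≠ T.root := ne_root_of_childCount_eq_zero hv (v.succAbove_ne 0)
  have hpv := parent_ne_of_childCount_eq_zero hv hvr
  obtain ⟨r, hr⟩ := Fin.exists_succAbove_eq hvr.symm
  obtain ⟨q, hq⟩ := Fin.exists_succAbove_eq (hpv v)
  choose p hp using fun x => Fin.exists_succAbove_eq (hpv (v.succAbove x))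
  have htree : IsRTree (n + 1) (r, p) := by
    rw [isRTree_iff_of_semiconj v.succAbove_right_injective (p' := T.parent) hp, hr]
    exact ⟨T.parent_root, fun x => T.exists_iterate_parent_eq_root _⟩
  refine ⟨q, ⟨(r, p), htree⟩, RTree.ext hr ((Fin.funext_iff_succAbove v).2 ⟨?_, ?_⟩)⟩
  · simpa using hq
  · funext x
    exact (attachLeaf_parent_succAbove x).trans (hp x)

noncomputable def attachLeafFiberEquiv (v : Fin (n + 2)) {d : Fin (n + 2) → ℕ} (hd : d v = 0) :
    {x : Fin (n + 1) × RTree (n + 1) // x.2.childCount + Pi.single x.1 1 = d ∘ v.succAbove} ≃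
      {T : RTree (n + 2) // T.childCount = d} :=
  Equiv.ofBijective
    (fun x => ⟨attachLeaf v x.1.1 x.1.2, (childCount_attachLeaf_eq_iff hd).2 x.2⟩)
    ⟨fun _ _ h => Subtype.ext (attachLeaf_injective v (congrArg Subtype.val h)),
    fun ⟨T, hT⟩ => by
      obtain ⟨q, T₀, rfl⟩ := exists_attachLeaf_eq ((congrFun hT v).trans hd)
      exact ⟨⟨(q, T₀), (childCount_attachLeaf_eq_iff hd).1 hT⟩, rfl⟩⟩

end RTree

lemma fiberCard_succAbove_comp_cons_eq_iff {n k : ℕ} {v : Fin (n + 1)} {d : Fin (n + 1) → ℕ}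
    (hd : d v = 0) (q : Fin n) (g : Fin k → Fin n) :
    fiberCard (v.succAbove ∘ Fin.cons q g) = d ↔
      fiberCard g + Pi.single q 1 = d ∘ v.succAbove := by
  rw [Fin.funext_iff_succAbove v, hd, fiberCard_comp_of_injective v.succAbove_right_injective,
    fiberCard_cons]
  exact and_iff_right (fiberCard_eq_zero_iff.2 fun _ => Fin.succAbove_ne _ _)

noncomputable def consFiberEquiv {n k : ℕ} (v : Fin (n + 1)) {d : Fin (n + 1) → ℕ}
    (hd : d v = 0) :
    {y : Fin n × (Fin k → Fin n) // fiberCard y.2 + Pi.single y.1 1 = d ∘ v.succAbove} ≃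
      {f : Fin (k + 1) → Fin (n + 1) // fiberCard f = d} :=
  Equiv.ofBijective
    (fun y => ⟨v.succAbove ∘ Fin.cons y.1.1 y.1.2,
      (fiberCard_succAbove_comp_cons_eq_iff hd _ _).2 y.2⟩)
    ⟨fun ⟨⟨q, g⟩, _⟩ ⟨⟨q', g'⟩, _⟩ h => by
      have h' := v.succAbove_right_injective.comp_left (congrArg Subtype.val h)
      obtain ⟨rfl, rfl⟩ := Fin.cons_inj.1 h'
      rfl,
    fun ⟨f, hf⟩ => by
      have hfv : ∀ i, f i ≠ v := fiberCard_eq_zero_iff.1 ((congrFun hf v).trans hd)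
      choose g hg using fun i => Fin.exists_succAbove_eq (hfv i)
      have hgf : v.succAbove ∘ Fin.cons (g 0) (Fin.tail g) = f := by
        rw [Fin.cons_self_tail]
        exact funext hg
      exact ⟨⟨(g 0, Fin.tail g), (fiberCard_succAbove_comp_cons_eq_iff hd _ _).1 (hgf ▸ hf)⟩,
        Subtype.ext hgf⟩⟩

theorem exists_equiv_childCount_eq_fiberCard (m : ℕ) :
    ∃ E : (Fin m → Fin (m + 1)) ≃ RTree (m + 1), ∀ f, (E f).childCount = fiberCard f := by
  induction m with
  | zero =>
    show ∃ E : (Fin 0 → Fin 1) ≃ RTree 1, _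
    let T₀ : RTree 1 := ⟨(0, id), rfl, fun _ => ⟨0, Subsingleton.elim _ _⟩⟩
    refine ⟨equivOfSubsingletonOfSubsingleton (fun _ => T₀) fun _ => Fin.elim0, fun f => ?_⟩
    funext j
    simp [RTree.childCount, fiberCard, Subsingleton.elim _ T₀.root]
  | succ m ih =>
    obtain ⟨E, hE⟩ := ih
    have fiberEquiv : ∀ d, Nonempty ({f : Fin (m + 1) → Fin (m + 2) // fiberCard f = d} ≃
        {T : RTree (m + 2) // T.childCount = d}) := by
      intro d
      by_cases hleaf : ∃ v, d v = 0
      · obtain ⟨v, hv⟩ := hleaf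
        exact ⟨(consFiberEquiv v hv).symm.trans <|
          (Equiv.subtypeEquiv ((Equiv.refl _).prodCongr E) fun y => by simp [hE]).trans
            (RTree.attachLeafFiberEquiv v hv)⟩
      · have hsum : ∑ j, d j ≠ m + 1 := fun h =>
          hleaf (Fintype.exists_eq_zero_of_sum_lt_card (by simp [h]))
        have : IsEmpty {f : Fin (m + 1) → Fin (m + 2) // fiberCard f = d} :=
          ⟨fun ⟨f, hf⟩ => hsum (by simpa [hf] using sum_fiberCard f)⟩
        have : IsEmpty {T : RTree (m + 2) // T.childCount = d} :=
          ⟨fun ⟨T, hT⟩ => hsum (by simpa [hT] using T.sum_childCount)⟩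
        exact ⟨Equiv.equivOfIsEmpty _ _⟩
    let e := fun d => (fiberEquiv d).some
    exact ⟨Equiv.ofFiberEquiv e, Equiv.ofFiberEquiv_map e⟩

/-- `(d/dg)^(n-1)[β(g)^n] = Σ_T ∏_j β^{(deg_T(j))}(g)`, the sum over all labeled rooted trees
`T` on an `n`-element vertex set, where `deg_T(j)` is the number of children of `j`. -/
theorem stmt11 (n : ℕ) (hn : 1 ≤ n) (β : Polynomial ℚ) :
    Polynomial.derivative^[n - 1] (β ^ n)
      = ∑ᶠ T : {rp : Fin n × (Fin n → Fin n) // IsRTree n rp},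
          ∏ j : Fin n,
            Polynomial.derivative^[Nat.card {i : Fin n // i ≠ T.val.1 ∧ T.val.2 i = j}] β := by
  obtain ⟨m, rfl⟩ : ∃ m, n = m + 1 := ⟨n - 1, by omega⟩
  obtain ⟨E, hE⟩ := exists_equiv_childCount_eq_fiberCard m
  have hLeibniz := iterate_derivative_prod_eq_sum_fiberCard m fun _ : Fin (m + 1) => β
  rw [Fin.prod_const] at hLeibniz
  rw [Nat.add_sub_cancel, hLeibniz, ← finsum_comp_equiv E, finsum_eq_sum_of_fintype]
  exact Finset.sum_congr rfl fun f _ => by simp_rw [← hE f]; rfl
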